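/- arXiv:2002.09169 — 6 statements merged into one kernel-verified Lean document; each statement's English description precedes it below -/
import Mathlib

section
/- Let f^♯: ℝ^d → [0,1], π₀ a probability density, π_δ(z) = π₀(z−δ), and p₀ = E_{z∼π₀}[f^♯(x₀+z)]. Then for any δ ∈ ℝ^d and any λ ≥ 0, E_{z∼π_δ}[f^♯(x₀+z)] ≥ λp₀ − ∫ (λπ₀(z) − π_δ(z))₊ dz. -/
/-! Weak duality holds pointwise: for `a ∈ [0, 1]`, `a * u - (u - v)₊ ≤ a * v`, since the
left side is `a * u` when `u ≤ v` and `v - (1 - a) * u ≤ a * v` otherwise. Integrating with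
`a = f (x₀ + z)`, `u = λ π₀ z` and `v = π₀ (z - δ)` gives the bound. -/

open MeasureTheory Set

lemma mul_sub_max_sub_zero_le_mul {a u v : ℝ} (ha : a ∈ Icc (0 : ℝ) 1) :
    a * u - max (u - v) 0 ≤ a * v := by
  rcases le_total u v with huv | hvu
  · rw [max_eq_right (sub_nonpos.mpr huv)]
    nlinarith [ha.1]
  · rw [max_eq_left (sub_nonneg.mpr hvu)]
    nlinarith [ha.2]

lemma integral_mul_sub_integral_posPart_le {α : Type*} [MeasurableSpace α] {μ : Measure α}
    {f u v : α → ℝ} (hf : AEStronglyMeasurable f μ) (hf01 : ∀ᵐ x ∂μ, f x ∈ Icc (0 : ℝ) 1)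
    (hu : Integrable u μ) (hv : Integrable v μ) :
    ∫ x, f x * u x ∂μ - ∫ x, max (u x - v x) 0 ∂μ ≤ ∫ x, f x * v x ∂μ := by
  have hf_bdd : ∀ᵐ x ∂μ, ‖f x‖ ≤ 1 := by
    filter_upwards [hf01] with x hx
    rw [Real.norm_eq_abs, abs_le]
    exact ⟨by linarith [hx.1], hx.2⟩
  have hfu : Integrable (fun x => f x * u x) μ := hu.bdd_mul hf hf_bdd
  have hfv : Integrable (fun x => f x * v x) μ := hv.bdd_mul hf hf_bdd
  have hpos : Integrable (fun x => max (u x - v x) 0) μ := (hu.sub hv).pos_part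
  rw [← integral_sub hfu hpos]
  refine integral_mono_ae (hfu.sub hpos) hfv ?_
  filter_upwards [hf01] with x hx
  exact mul_sub_max_sub_zero_le_mul hx

theorem stmt_3_general {d : ℕ} (π₀ : (Fin d → ℝ) → ℝ)
    (hint : Integrable π₀)
    (f : (Fin d → ℝ) → ℝ) (hf : Measurable f) (hf01 : ∀ z, f z ∈ Icc (0:ℝ) 1)
    (x₀ : Fin d → ℝ) (p₀ : ℝ) (hp₀ : p₀ = ∫ z, f (x₀ + z) * π₀ z)
    (δ : Fin d → ℝ) (lam : ℝ) :
    lam * p₀ - ∫ z, max (lam * π₀ z - π₀ (z - δ)) 0 ≤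
      ∫ z, f (x₀ + z) * π₀ (z - δ) := by
  have hlam_p₀ : lam * p₀ = ∫ z, f (x₀ + z) * (lam * π₀ z) := by
    rw [hp₀, ← integral_const_mul]
    simp only [mul_left_comm]
  rw [hlam_p₀]
  exact integral_mul_sub_integral_posPart_le
    (hf.comp (measurable_const_add x₀)).aestronglyMeasurable
    (Filter.Eventually.of_forall fun z => hf01 (x₀ + z))
    (hint.const_mul lam) (hint.comp_sub_right δ)

theorem stmt_3 {d : ℕ} (π₀ : (Fin d → ℝ) → ℝ)
    (hmeas : Measurable π₀) (hpos : ∀ z, 0 ≤ π₀ z)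
    (hint : Integrable π₀) (hprob : ∫ z, π₀ z = 1)
    (f : (Fin d → ℝ) → ℝ) (hf : Measurable f) (hf01 : ∀ z, f z ∈ Icc (0:ℝ) 1)
    (x₀ : Fin d → ℝ) (p₀ : ℝ) (hp₀ : p₀ = ∫ z, f (x₀ + z) * π₀ z)
    (δ : Fin d → ℝ) (lam : ℝ) (hlam : 0 ≤ lam) :
    lam * p₀ - ∫ z, max (lam * π₀ z - π₀ (z - δ)) 0 ≤
      ∫ z, f (x₀ + z) * π₀ (z - δ) :=
  stmt_3_general π₀ hint f hf hf01 x₀ p₀ hp₀ δ lam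
end

section
/- (Strong duality in the smoothing certification problem for a fixed shift.) Let π₀ be a probability density on ℝ^d, π_δ its translate by a fixed δ, and p₀ ∈ (0,1). Then min over measurable f: ℝ^d → [0,1] with E_{π₀}[f] = p₀ of E_{π_δ}[f] equals max over λ ∈ ℝ of (λp₀ − ∫ (λπ₀(z) − π_δ(z))₊ dz). -/
/-!
Weak duality is pointwise: for `f` with values in `[0,1]`,
`E_{π_δ}[f] = λ E_{π₀}[f] - ∫ f (λπ₀ - π_δ) ≥ λ p₀ - ∫ (λπ₀ - π_δ)₊`.
Equality holds exactly when `f = 1` where `π_δ < λπ₀` and `f = 0` where `π_δ > λπ₀`, i.e. for a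
Neyman–Pearson test. Such a test with `E_{π₀}[f] = p₀` exists: take for `λ` a quantile of the
likelihood ratio, so that `∫_{π_δ < λπ₀} π₀ ≤ p₀ ≤ ∫_{π_δ ≤ λπ₀} π₀`, and randomize on the
level set `π_δ = λπ₀`. Its value is then both the minimum and the maximum.
-/

open MeasureTheory Set Filter Topology

namespace NeymanPearson

lemma exists_threshold {F : ℝ → ℝ} (hF : Monotone F) {p a b : ℝ} (ha : F a ≤ p) (hb : p < F b) :
    ∃ c, (∀ l < c, F l ≤ p) ∧ ∀ l, c < l → p < F l := by
  set S := {l | F l ≤ p}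
  have hbdd : BddAbove S :=
    ⟨b, fun l hl => le_of_not_gt fun hbl => (hb.trans_le (hF hbl.le)).not_ge hl⟩
  refine ⟨sSup S, fun l hl => ?_,
    fun l hl => lt_of_not_ge fun hlp => (le_csSup hbdd hlp).not_gt hl⟩
  obtain ⟨s, hs, hls⟩ := exists_lt_of_lt_csSup ⟨a, ha⟩ hl
  exact (hF hls.le).trans hs

lemma monotone_setOf_lt_mul {α : Type*} {P Q : α → ℝ} (hP0 : ∀ z, 0 ≤ P z) :
    Monotone fun l : ℝ => {z | Q z < l * P z} :=
  fun _ _ hl _ hz => hz.trans_le (mul_le_mul_of_nonneg_right hl (hP0 _))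

variable {α : Type*} [MeasurableSpace α] {μ : Measure α} {P Q f : α → ℝ}

lemma integrable_mul_of_mem_Icc (hf : Measurable f) (hf01 : ∀ z, f z ∈ Icc (0:ℝ) 1)
    (hP : Integrable P μ) : Integrable (fun z => f z * P z) μ :=
  hP.bdd_mul hf.aestronglyMeasurable
    (ae_of_all _ fun z => abs_le.2 ⟨by linarith [(hf01 z).1], (hf01 z).2⟩)

lemma integral_mul_le_integral_posPart {t : α → ℝ} (hf : Measurable f)
    (hf01 : ∀ z, f z ∈ Icc (0:ℝ) 1) (ht : Integrable t μ) :
    ∫ z, f z * t z ∂μ ≤ ∫ z, max (t z) 0 ∂μ :=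
  integral_mono (integrable_mul_of_mem_Icc hf hf01 ht) ht.pos_part fun z => by
    obtain ⟨hf0, hf1⟩ := hf01 z
    rcases le_total (t z) 0 with h | h
    · nlinarith [le_max_right (t z) 0]
    · nlinarith [le_max_left (t z) 0]

lemma integral_mul_eq_integral_posPart {t : α → ℝ} (h1 : ∀ z, 0 < t z → f z = 1)
    (h0 : ∀ z, t z < 0 → f z = 0) :
    ∫ z, f z * t z ∂μ = ∫ z, max (t z) 0 ∂μ := by
  refine integral_congr_ae (ae_of_all _ fun z => ?_)
  rcases lt_trichotomy (t z) 0 with h | h | h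
  · simp [h0 z h, h.le]
  · simp [h]
  · simp [h1 z h, h.le]

lemma integral_mul_eq_mul_integral_sub (hf : Measurable f) (hf01 : ∀ z, f z ∈ Icc (0:ℝ) 1)
    (hP : Integrable P μ) (hQ : Integrable Q μ) (l : ℝ) :
    ∫ z, f z * Q z ∂μ = l * ∫ z, f z * P z ∂μ - ∫ z, f z * (l * P z - Q z) ∂μ := by
  have hsplit : (fun z => f z * (l * P z - Q z)) = fun z => l * (f z * P z) - f z * Q z := by
    ext z; ring
  rw [hsplit, integral_sub ((integrable_mul_of_mem_Icc hf hf01 hP).const_mul l)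
    (integrable_mul_of_mem_Icc hf hf01 hQ), integral_const_mul]
  ring

theorem weak_duality (hf : Measurable f) (hf01 : ∀ z, f z ∈ Icc (0:ℝ) 1)
    (hP : Integrable P μ) (hQ : Integrable Q μ) (l : ℝ) :
    l * ∫ z, f z * P z ∂μ - ∫ z, max (l * P z - Q z) 0 ∂μ ≤ ∫ z, f z * Q z ∂μ := by
  rw [integral_mul_eq_mul_integral_sub hf hf01 hP hQ l]
  linarith [integral_mul_le_integral_posPart (t := fun z => l * P z - Q z) hf hf01
    ((hP.const_mul l).sub hQ)]

theorem no_duality_gap (hf : Measurable f) (hf01 : ∀ z, f z ∈ Icc (0:ℝ) 1)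
    (hP : Integrable P μ) (hQ : Integrable Q μ) {c : ℝ}
    (h1 : ∀ z, Q z < c * P z → f z = 1) (h0 : ∀ z, c * P z < Q z → f z = 0) :
    ∫ z, f z * Q z ∂μ = c * ∫ z, f z * P z ∂μ - ∫ z, max (c * P z - Q z) 0 ∂μ := by
  rw [integral_mul_eq_mul_integral_sub hf hf01 hP hQ c,
    integral_mul_eq_integral_posPart (t := fun z => c * P z - Q z)
      (fun z hz => h1 z (by linarith)) (fun z hz => h0 z (by linarith))]

lemma setIntegral_mono_of_subset (hP0 : ∀ z, 0 ≤ P z) (hP : Integrable P μ) {s t : Set α}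
    (hst : s ⊆ t) : ∫ z in s, P z ∂μ ≤ ∫ z in t, P z ∂μ :=
  setIntegral_mono_set hP.integrableOn (ae_of_all _ fun z => hP0 z) hst.eventuallyLE

variable (μ) in
lemma setIntegral_setOf_lt_zero_mul (hQ0 : ∀ z, 0 ≤ Q z) :
    ∫ z in {z | Q z < 0 * P z}, P z ∂μ = 0 := by
  simp [fun z => not_lt.2 (hQ0 z)]

lemma exists_lt_setIntegral_setOf_lt_mul (hP0 : ∀ z, 0 ≤ P z) (hPm : Measurable P)
    (hQm : Measurable Q) (hP : Integrable P μ) {p : ℝ} (hp : p < ∫ z, P z ∂μ) :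
    ∃ b, p < ∫ z in {z | Q z < b * P z}, P z ∂μ := by
  have hsupp : ∀ z, z ∉ ⋃ l : ℝ, {z | Q z < l * P z} → P z = 0 := by
    refine fun z hz => (hP0 z).antisymm' (not_lt.1 fun hPz => hz ?_)
    refine mem_iUnion.2 ⟨Q z / P z + 1, ?_⟩
    show Q z < (Q z / P z + 1) * P z
    rw [add_mul, div_mul_cancel₀ _ hPz.ne']
    linarith
  have htend := tendsto_setIntegral_of_monotone (μ := μ)
    (fun l => measurableSet_lt hQm (hPm.const_mul _)) (monotone_setOf_lt_mul hP0)
    hP.integrableOn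
  rw [setIntegral_eq_integral_of_forall_compl_eq_zero hsupp] at htend
  exact (htend.eventually (lt_mem_nhds hp)).exists

lemma setIntegral_setOf_lt_mul_le_of_forall_lt (hP0 : ∀ z, 0 ≤ P z) (hPm : Measurable P)
    (hQm : Measurable Q) (hP : Integrable P μ) {c p : ℝ}
    (h : ∀ l < c, ∫ z in {z | Q z < l * P z}, P z ∂μ ≤ p) :
    ∫ z in {z | Q z < c * P z}, P z ∂μ ≤ p := by
  obtain ⟨u, hu_mono, hu_lt, hu_lim⟩ := exists_seq_strictMono_tendsto c
  have hunion : ⋃ n, {z | Q z < u n * P z} = {z | Q z < c * P z} := by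
    refine Subset.antisymm (iUnion_subset fun n => monotone_setOf_lt_mul (Q := Q) hP0 (hu_lt n).le)
      fun z hz => mem_iUnion.2 ?_
    exact ((hu_lim.mul_const (P z)).eventually (lt_mem_nhds hz)).exists
  have htend := tendsto_setIntegral_of_monotone (μ := μ)
    (fun n => measurableSet_lt hQm (hPm.const_mul _))
    ((monotone_setOf_lt_mul hP0).comp hu_mono.monotone) hP.integrableOn
  rw [hunion] at htend
  exact le_of_tendsto' htend fun n => h _ (hu_lt n)

lemma le_setIntegral_setOf_le_mul_of_forall_gt (hP0 : ∀ z, 0 ≤ P z) (hPm : Measurable P)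
    (hQm : Measurable Q) (hP : Integrable P μ) {c p : ℝ}
    (h : ∀ l, c < l → p ≤ ∫ z in {z | Q z < l * P z}, P z ∂μ) :
    p ≤ ∫ z in {z | Q z ≤ c * P z}, P z ∂μ := by
  obtain ⟨u, hu_anti, hu_gt, hu_lim⟩ := exists_seq_strictAnti_tendsto c
  have hinter : ⋂ n, {z | Q z < u n * P z} ⊆ {z | Q z ≤ c * P z} := fun z hz =>
    ge_of_tendsto' (hu_lim.mul_const (P z)) fun n => (mem_iInter.1 hz n).le
  have htend := tendsto_setIntegral_of_antitone (μ := μ)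
    (fun n => measurableSet_lt hQm (hPm.const_mul _))
    ((monotone_setOf_lt_mul hP0).comp_antitone hu_anti.antitone) ⟨0, hP.integrableOn⟩
  exact (ge_of_tendsto' htend fun n => h _ (hu_gt n)).trans
    (setIntegral_mono_of_subset hP0 hP hinter)

theorem exists_test (hP0 : ∀ z, 0 ≤ P z) (hQ0 : ∀ z, 0 ≤ Q z) (hPm : Measurable P)
    (hQm : Measurable Q) (hP : Integrable P μ) {p : ℝ} (hp0 : 0 ≤ p)
    (hp : p < ∫ z, P z ∂μ) :
    ∃ c f, Measurable f ∧ (∀ z, f z ∈ Icc (0:ℝ) 1) ∧ (∀ z, Q z < c * P z → f z = 1) ∧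
      (∀ z, c * P z < Q z → f z = 0) ∧ ∫ z, f z * P z ∂μ = p := by
  have hF : Monotone fun l : ℝ => ∫ z in {z | Q z < l * P z}, P z ∂μ :=
    fun _ _ hl => setIntegral_mono_of_subset hP0 hP (monotone_setOf_lt_mul hP0 hl)
  obtain ⟨b, hb⟩ := exists_lt_setIntegral_setOf_lt_mul hP0 hPm hQm hP hp
  obtain ⟨c, hlt, hgt⟩ := exists_threshold hF
    ((setIntegral_setOf_lt_zero_mul μ hQ0).trans_le hp0) hb
  set A := {z | Q z < c * P z}
  set C := {z | Q z ≤ c * P z}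
  have hA : MeasurableSet A := measurableSet_lt hQm (hPm.const_mul _)
  have hC : MeasurableSet C := measurableSet_le hQm (hPm.const_mul _)
  have hpA : ∫ z in A, P z ∂μ ≤ p := setIntegral_setOf_lt_mul_le_of_forall_lt hP0 hPm hQm hP hlt
  have hpC : p ≤ ∫ z in C, P z ∂μ :=
    le_setIntegral_setOf_le_mul_of_forall_gt hP0 hPm hQm hP fun l hl => (hgt l hl).le
  obtain ⟨γ, ⟨hγ0, hγ1⟩, hγp⟩ : p ∈ (fun θ : ℝ => (1 - θ) • ∫ z in A, P z ∂μ +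
      θ • ∫ z in C, P z ∂μ) '' Icc 0 1 := by
    rw [← segment_eq_image, segment_eq_Icc (hpA.trans hpC)]
    exact ⟨hpA, hpC⟩
  have hAC : A ⊆ C := fun _ hz => le_of_lt (α := ℝ) hz
  refine ⟨c, fun z => (1 - γ) * A.indicator 1 z + γ * C.indicator 1 z,
    ((measurable_one.indicator hA).const_mul _).add ((measurable_one.indicator hC).const_mul _),
    fun z => ?_, fun z (hz : z ∈ A) => by simp [indicator, hz, hAC hz],
    fun z hz => by simp [indicator, A, C, hz.not_gt, hz.not_ge], ?_⟩
  · by_cases hzA : z ∈ A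
    · simp [indicator, hzA, hAC hzA]
    · by_cases hzC : z ∈ C <;> simp [indicator, hzA, hzC, hγ0, hγ1]
  · have hpt : ∀ z, ((1 - γ) * A.indicator 1 z + γ * C.indicator 1 z) * P z =
        (1 - γ) * A.indicator P z + γ * C.indicator P z := fun z => by
      simp only [indicator, Pi.one_apply]; split_ifs <;> ring
    simp_rw [hpt]
    rw [integral_add ((hP.indicator hA).const_mul _) ((hP.indicator hC).const_mul _),
      integral_const_mul, integral_const_mul, integral_indicator hA, integral_indicator hC]
    simpa using hγp

end NeymanPearson

/-- Strong duality for the smoothing certification problem at a fixed shift: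
the minimum of `E_{π_δ}[f]` over measurable `f : ℝ^d → [0,1]` with `E_{π₀}[f] = p₀`
equals the maximum over `λ ∈ ℝ` of `λ p₀ - ∫ (λ π₀ - π_δ)₊`. -/
theorem stmt_4 {d : ℕ} (π₀ : (Fin d → ℝ) → ℝ)
    (hmeas : Measurable π₀) (hpos : ∀ z, 0 ≤ π₀ z)
    (hint : Integrable π₀) (hprob : ∫ z, π₀ z = 1)
    (δ : Fin d → ℝ) (p₀ : ℝ) (hp₀ : p₀ ∈ Ioo (0:ℝ) 1) :
    ∃ L : ℝ,
      IsLeast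
        {v : ℝ | ∃ f : (Fin d → ℝ) → ℝ, Measurable f ∧ (∀ z, f z ∈ Icc (0:ℝ) 1) ∧
          (∫ z, f z * π₀ z) = p₀ ∧ v = ∫ z, f z * π₀ (z - δ)} L ∧
      IsGreatest
        {v : ℝ | ∃ lam : ℝ, v = lam * p₀ - ∫ z, max (lam * π₀ z - π₀ (z - δ)) 0} L := by
  set Q : (Fin d → ℝ) → ℝ := fun z => π₀ (z - δ)
  have hQm : Measurable Q := hmeas.comp (measurable_id.sub_const δ)
  have hQ : Integrable Q := hint.comp_sub_right δ
  obtain ⟨c, f₀, hf₀m, hf₀01, hf₀1, hf₀0, hf₀p⟩ := NeymanPearson.exists_test hpos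
    (fun z => hpos (z - δ)) hmeas hQm hint hp₀.1.le (hprob ▸ hp₀.2)
  have hgap := NeymanPearson.no_duality_gap hf₀m hf₀01 hint hQ hf₀1 hf₀0
  rw [hf₀p] at hgap
  refine ⟨_, ⟨⟨f₀, hf₀m, hf₀01, hf₀p, rfl⟩, ?_⟩, ⟨⟨c, hgap⟩, ?_⟩⟩
  · rintro v ⟨f, hfm, hf01, hfp, rfl⟩
    rw [hgap, ← hfp]
    exact NeymanPearson.weak_duality hfm hf01 hint hQ c
  · rintro v ⟨l, rfl⟩
    rw [← hf₀p]
    exact NeymanPearson.weak_duality hf₀m hf₀01 hint hQ l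
end

section
/- Let π₀ = N(0, σ²I_d) and δ ∈ ℝ^d with ‖δ‖₂ > 0. For λ > 0, ∫ (λπ₀(z) − π₀(z−δ))₊ dz = λ·Φ(‖δ‖₂/(2σ) + σ ln λ/‖δ‖₂) − Φ(−‖δ‖₂/(2σ) + σ ln λ/‖δ‖₂), where Φ is the standard Gaussian CDF. -/
/-!
Rotate `δ` onto a coordinate axis: a linear isometry preserves Lebesgue measure and the
isotropic Gaussian. The density then factorizes over coordinates and only one factor sees the
shift, so the positive part factorizes as well and the other `d - 1` factors integrate to `1`.
In dimension one the likelihood ratio `φ(t - r) / φ(t) = exp ((r t - r² / 2) / σ²)` is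
increasing, so `λ φ(t) ≥ φ(t - r)` exactly on `t ≤ c := r / 2 + σ² log λ / r`, and the integral
is `λ Φ(c / σ) - Φ((c - r) / σ)`.
-/

open MeasureTheory Real

/-- CDF of the one-dimensional standard normal distribution. -/
noncomputable def stdNormalCDF (x : ℝ) : ℝ :=
  ∫ t in Set.Iic x, (Real.sqrt (2 * π))⁻¹ * Real.exp (-t ^ 2 / 2)

open ProbabilityTheory Function
open scoped NNReal

theorem LinearIsometryEquiv.exists_apply_eq_of_norm_eq {E : Type*} [NormedAddCommGroup E]
    [InnerProductSpace ℝ E] {x y : E} (h : ‖x‖ = ‖y‖) : ∃ T : E ≃ₗᵢ[ℝ] E, T x = y :=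
  ⟨_, Submodule.reflection_sub h⟩

theorem integral_euclideanSpace_prod {ι 𝕜 : Type*} [Fintype ι] [RCLike 𝕜] (f : ι → ℝ → 𝕜) :
    ∫ x : EuclideanSpace ℝ ι, ∏ i, f i (x i) = ∏ i, ∫ t, f i t := by
  rw [← (PiLp.volume_preserving_toLp ι).integral_comp
    (MeasurableEquiv.toLp 2 (ι → ℝ)).measurableEmbedding]
  exact integral_fintype_prod_volume_eq_prod f

theorem max_mul_prod_sub_prod_update {ι : Type*} [Fintype ι] [DecidableEq ι] {f : ι → ℝ}
    (hf : ∀ i, 0 ≤ f i) (i₀ : ι) (lam b : ℝ) :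
    max (lam * ∏ i, f i - ∏ i, update f i₀ b i) 0 =
      ∏ i, update f i₀ (max (lam * f i₀ - b) 0) i := by
  rw [Finset.prod_update_of_mem (Finset.mem_univ _), Finset.prod_update_of_mem (Finset.mem_univ _),
    Finset.prod_eq_mul_prod_sdiff_singleton_of_mem (Finset.mem_univ i₀), ← mul_assoc, ← sub_mul,
    max_mul_of_nonneg _ _ (Finset.prod_nonneg fun i _ ↦ hf i), zero_mul]

theorem stdNormalCDF_eq_setIntegral (x : ℝ) :
    stdNormalCDF x = ∫ t in Set.Iic x, gaussianPDFReal 0 1 t := by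
  simp [stdNormalCDF, gaussianPDFReal]

theorem gaussianReal_map_sub_div_sqrt {v : ℝ≥0} (hv : v ≠ 0) (μ : ℝ) :
    (gaussianReal μ v).map (fun t ↦ (t - μ) / √v) = gaussianReal 0 1 := by
  have h := gaussianReal_map_div_const (μ := μ - μ) (v := v) √v
  rw [← gaussianReal_map_sub_const, Measure.map_map (by fun_prop) (by fun_prop)] at h
  convert h using 2
  · rfl
  · simp
  · ext; simp [hv]

theorem setIntegral_Iic_gaussianPDFReal {v : ℝ≥0} (hv : v ≠ 0) (μ c : ℝ) :
    ∫ t in Set.Iic c, gaussianPDFReal μ v t = stdNormalCDF ((c - μ) / √v) := by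
  have hpre : (fun t ↦ (t - μ) / √v) ⁻¹' Set.Iic ((c - μ) / √v) = Set.Iic c := by
    ext t; simp [div_le_div_iff_of_pos_right (by positivity : (0:ℝ) < √v)]
  rw [stdNormalCDF_eq_setIntegral, ← ENNReal.ofReal_eq_ofReal_iff
      (setIntegral_nonneg measurableSet_Iic fun _ _ ↦ gaussianPDFReal_nonneg _ _ _)
      (setIntegral_nonneg measurableSet_Iic fun _ _ ↦ gaussianPDFReal_nonneg _ _ _),
    ← gaussianReal_apply_eq_integral _ hv, ← gaussianReal_apply_eq_integral _ one_ne_zero,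
    ← gaussianReal_map_sub_div_sqrt hv μ, Measure.map_apply (by fun_prop) measurableSet_Iic, hpre]

theorem gaussianPDFReal_eq_mul_exp (r : ℝ) {v : ℝ≥0} (hv : v ≠ 0) (t : ℝ) :
    gaussianPDFReal r v t = gaussianPDFReal 0 v t * exp ((r * t - r ^ 2 / 2) / v) := by
  have hv' : (v : ℝ) ≠ 0 := by exact_mod_cast hv
  simp only [gaussianPDFReal, mul_assoc, ← exp_add]
  congr 2
  field_simp
  ring

theorem gaussianPDFReal_le_mul_iff {r lam : ℝ} (hr : 0 < r) (hlam : 0 < lam) {v : ℝ≥0}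
    (hv : v ≠ 0) (t : ℝ) :
    gaussianPDFReal r v t ≤ lam * gaussianPDFReal 0 v t ↔ t ≤ r / 2 + v * log lam / r := by
  have hv' : (0 : ℝ) < v := by positivity
  rw [gaussianPDFReal_eq_mul_exp r hv, mul_comm lam,
    mul_le_mul_iff_right₀ (gaussianPDFReal_pos _ _ _ hv), ← le_log_iff_exp_le hlam,
    div_le_iff₀ hv', ← sub_le_iff_le_add', le_div_iff₀ hr]
  constructor <;> intro h <;> linarith

theorem integral_max_mul_gaussianPDFReal_sub {r lam : ℝ} (hr : 0 < r) (hlam : 0 < lam) {v : ℝ≥0}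
    (hv : v ≠ 0) :
    ∫ t, max (lam * gaussianPDFReal 0 v t - gaussianPDFReal r v t) 0 =
      lam * stdNormalCDF ((r / 2 + v * log lam / r) / √v)
        - stdNormalCDF ((r / 2 + v * log lam / r - r) / √v) := by
  set c := r / 2 + v * log lam / r
  have hpos_part : (fun t ↦ max (lam * gaussianPDFReal 0 v t - gaussianPDFReal r v t) 0) =
      (Set.Iic c).indicator (fun t ↦ lam * gaussianPDFReal 0 v t - gaussianPDFReal r v t) := by
    ext t
    rw [Set.indicator_apply]
    split_ifs with ht
    · exact max_eq_left (sub_nonneg.2 ((gaussianPDFReal_le_mul_iff hr hlam hv t).2 ht))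
    · exact max_eq_right
        (sub_nonpos.2 (not_le.1 ((gaussianPDFReal_le_mul_iff hr hlam hv t).not.2 ht)).le)
  rw [hpos_part, integral_indicator measurableSet_Iic,
    integral_sub ((integrable_gaussianPDFReal 0 v).const_mul lam).integrableOn
      (integrable_gaussianPDFReal r v).integrableOn, integral_const_mul,
    setIntegral_Iic_gaussianPDFReal hv, setIntegral_Iic_gaussianPDFReal hv, sub_zero]

theorem prod_gaussianPDFReal_eq_rpow_mul_exp {ι : Type*} [Fintype ι] (v : ℝ≥0)
    (a w : EuclideanSpace ℝ ι) :
    ∏ i, gaussianPDFReal (a i) v (w i) =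
      (2 * π * v) ^ (-(Fintype.card ι : ℝ) / 2) * exp (-‖w - a‖ ^ 2 / (2 * v)) := by
  have hnorm : ‖w - a‖ ^ 2 = ∑ i, (w i - a i) ^ 2 := by
    simp [EuclideanSpace.real_norm_sq_eq]
  have hconst : (√(2 * π * v))⁻¹ ^ Fintype.card ι = (2 * π * v) ^ (-(Fintype.card ι : ℝ) / 2) := by
    rw [sqrt_eq_rpow, ← rpow_neg (by positivity), ← rpow_natCast, ← rpow_mul (by positivity)]
    ring_nf
  simp only [gaussianPDFReal, Finset.prod_mul_distrib, Finset.prod_const, Finset.card_univ,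
    ← exp_sum, hconst, hnorm, Finset.sum_div, Finset.sum_neg_distrib, neg_div]

theorem max_mul_prod_gaussianPDFReal_sub_single {ι : Type*} [Fintype ι] [DecidableEq ι]
    (v : ℝ≥0) (lam r : ℝ) (i₀ : ι) (w : EuclideanSpace ℝ ι) :
    max (lam * ∏ i, gaussianPDFReal 0 v (w i)
        - ∏ i, gaussianPDFReal (EuclideanSpace.single i₀ r i) v (w i)) 0 =
      ∏ i, update (fun _ ↦ gaussianPDFReal 0 v) i₀
        (fun t ↦ max (lam * gaussianPDFReal 0 v t - gaussianPDFReal r v t) 0) i (w i) := by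
  have hshift : ∏ i, gaussianPDFReal (EuclideanSpace.single i₀ r i) v (w i) =
      ∏ i, update (fun i ↦ gaussianPDFReal 0 v (w i)) i₀ (gaussianPDFReal r v (w i₀)) i := by
    congr 1; ext i
    by_cases h : i = i₀ <;> simp [h]
  rw [hshift, max_mul_prod_sub_prod_update fun i ↦ gaussianPDFReal_nonneg _ _ _]
  congr 1; ext i
  by_cases h : i = i₀ <;> simp [h]

theorem integral_max_mul_prod_gaussianPDFReal_sub_single {ι : Type*} [Fintype ι] [DecidableEq ι]
    {v : ℝ≥0} (hv : v ≠ 0) (lam r : ℝ) (i₀ : ι) :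
    ∫ w : EuclideanSpace ℝ ι, max (lam * ∏ i, gaussianPDFReal 0 v (w i)
        - ∏ i, gaussianPDFReal (EuclideanSpace.single i₀ r i) v (w i)) 0 =
      ∫ t, max (lam * gaussianPDFReal 0 v t - gaussianPDFReal r v t) 0 := by
  simp_rw [max_mul_prod_gaussianPDFReal_sub_single, integral_euclideanSpace_prod]
  rw [Finset.prod_eq_single_of_mem i₀ (Finset.mem_univ _) fun i _ hi ↦ by
    simp [update_of_ne hi, integral_gaussianPDFReal_eq_one _ hv], update_self]

theorem stmt_8 {d : ℕ} (σ : ℝ) (hσ : 0 < σ)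
    (π₀ : EuclideanSpace ℝ (Fin d) → ℝ)
    (hπ₀ : π₀ = fun z => (2 * π * σ ^ 2) ^ (-(d:ℝ) / 2) * Real.exp (-‖z‖ ^ 2 / (2 * σ ^ 2)))
    (δ : EuclideanSpace ℝ (Fin d)) (hδ : 0 < ‖δ‖)
    (lam : ℝ) (hlam : 0 < lam) :
    ∫ z, max (lam * π₀ z - π₀ (z - δ)) 0 =
      lam * stdNormalCDF (‖δ‖ / (2 * σ) + σ * Real.log lam / ‖δ‖)
        - stdNormalCDF (-‖δ‖ / (2 * σ) + σ * Real.log lam / ‖δ‖) := by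
  obtain ⟨i₀⟩ : Nonempty (Fin d) := by
    by_contra h
    rw [not_nonempty_iff] at h
    simp [Subsingleton.elim δ 0] at hδ
  set r := ‖δ‖
  set v : ℝ≥0 := (σ ^ 2).toNNReal
  have hv_coe : (v : ℝ) = σ ^ 2 := Real.coe_toNNReal _ (sq_nonneg σ)
  have hv : v ≠ 0 := (Real.toNNReal_pos.2 (by positivity)).ne'
  obtain ⟨T, hT⟩ := LinearIsometryEquiv.exists_apply_eq_of_norm_eq
    (x := EuclideanSpace.single i₀ r) (y := δ) (by simp [r])
  have hπ : ∀ a w, π₀ (T w - T a) = ∏ i, gaussianPDFReal (a i) v (w i) := by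
    intro a w
    rw [prod_gaussianPDFReal_eq_rpow_mul_exp, hv_coe, Fintype.card_fin, ← map_sub, hπ₀]
    simp only [T.norm_map]
  calc ∫ z, max (lam * π₀ z - π₀ (z - δ)) 0
      = ∫ w, max (lam * π₀ (T w - T 0) - π₀ (T w - T (EuclideanSpace.single i₀ r))) 0 := by
        rw [← (T.measurePreserving.integral_comp T.toHomeomorph.measurableEmbedding _), hT]
        simp
    _ = ∫ t, max (lam * gaussianPDFReal 0 v t - gaussianPDFReal r v t) 0 := by
        simp only [hπ, PiLp.zero_apply]
        exact integral_max_mul_prod_gaussianPDFReal_sub_single hv lam r i₀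
    _ = _ := by
        rw [integral_max_mul_gaussianPDFReal_sub hδ hlam hv, hv_coe, sqrt_sq hσ.le]
        congr 2
        · field_simp
        · field_simp; ring
end

section
/- Let π₀(z) ∝ ‖z‖_∞^{−k₁}‖z‖₂^{−k₂} exp(−‖z‖₂²/(2σ²)) with k₁, k₂ ≥ 0 and σ > 0 (assumed integrable), and define D(δ) = ∫ (λπ₀(z) − π₀(z−δ))₊ dz for λ ≥ 0. Then for each coordinate i, sgn(δ_i)·∂D/∂δ_i ≥ 0; that is, D is nondecreasing in |δ_i| in each coordinate. -/
/-!
Write `f = π₀` and `M(δ) = ∫ min (λ f z) (f (z - δ)) dz`, so that `D(δ) = λ ∫ f - M(δ)`. Given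
`0 ≤ δᵢ ≤ δ'ᵢ`, let `R` be the reflection of the `i`-th coordinate about `c / 2`, where
`c = δᵢ + δ'ᵢ`. Since `f` is even in `zᵢ`, `R` exchanges the translates `f (· - δ)` and
`f (· - δ')`. On the half-space `2 zᵢ ≤ c` the point `z` is closer than `R z` to the hyperplane
`zᵢ = 0`, and `z - δ` is closer than `z - δ'`. Since `f` decreases in `|zᵢ|` and `min` is
supermodular, the integrands of `M(δ')` and `M(δ)`, summed over `z` and `R z`, are in the right
order. `R` preserves volume, so integrating gives `M(δ') ≤ M(δ)`.
-/

open MeasureTheory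

lemma min_add_min_le_min_add_min {a b p q : ℝ} (hab : b ≤ a) (hqp : q ≤ p) :
    min a q + min b p ≤ min a p + min b q := by
  simp only [min_def]
  split_ifs <;> linarith

lemma abs_sub_le_abs_sub_of_two_mul_le {t a b : ℝ} (hab : a ≤ b) (ht : 2 * t ≤ a + b) :
    |t - a| ≤ |t - b| :=
  sq_le_sq.mp (by nlinarith)

lemma abs_sub_le_abs_sub_of_le_two_mul {t a b : ℝ} (hab : a ≤ b) (ht : a + b ≤ 2 * t) :
    |t - b| ≤ |t - a| :=
  sq_le_sq.mp (by nlinarith)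

lemma integral_max_sub_zero_eq {α : Type*} [MeasurableSpace α] {μ : Measure α} {g h : α → ℝ}
    (hg : Integrable g μ) (hh : Integrable h μ) :
    ∫ x, max (g x - h x) 0 ∂μ = ∫ x, g x ∂μ - ∫ x, min (g x) (h x) ∂μ := by
  have hpt : ∀ x, max (g x - h x) 0 = g x - min (g x) (h x) := fun x => by
    rcases le_total (g x) (h x) with hgh | hgh
    · rw [min_eq_left hgh, max_eq_right (by linarith), sub_self]
    · rw [min_eq_right hgh, max_eq_left (by linarith)]
  simp only [hpt]
  exact integral_sub hg (hg.inf hh)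

lemma integral_le_integral_of_add_comp_le {α : Type*} [MeasurableSpace α] {μ : Measure α}
    {e : α ≃ᵐ α} (he : MeasurePreserving e μ μ) {G H : α → ℝ}
    (hG : Integrable G μ) (hH : Integrable H μ)
    (hGH : ∀ᵐ x ∂μ, G x + G (e x) ≤ H x + H (e x)) :
    ∫ x, G x ∂μ ≤ ∫ x, H x ∂μ := by
  have hGe : Integrable (fun x => G (e x)) μ := he.integrable_comp_of_integrable hG
  have hHe : Integrable (fun x => H (e x)) μ := he.integrable_comp_of_integrable hH
  have hsum : ∫ x, (G x + G (e x)) ∂μ ≤ ∫ x, (H x + H (e x)) ∂μ :=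
    integral_mono_ae (hG.add hGe) (hH.add hHe) hGH
  rw [integral_add hG hGe, integral_add hH hHe,
    he.integral_comp' G, he.integral_comp' H] at hsum
  linarith

section Reflection

variable {ι : Type*} [DecidableEq ι]

def reflectCoord (i : ι) (c : ℝ) (x : ι → ℝ) (j : ι) : ℝ :=
  if j = i then c - x j else x j

@[simp]
lemma reflectCoord_self (i : ι) (c : ℝ) (x : ι → ℝ) : reflectCoord i c x i = c - x i :=
  if_pos rfl

lemma reflectCoord_of_ne {i j : ι} (c : ℝ) (x : ι → ℝ) (hj : j ≠ i) :
    reflectCoord i c x j = x j :=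
  if_neg hj

lemma reflectCoord_involutive (i : ι) (c : ℝ) : Function.Involutive (reflectCoord i c) :=
  fun x => funext fun j => by
    by_cases hj : j = i
    · subst hj; simp
    · simp [reflectCoord_of_ne c _ hj]

variable [Fintype ι]

lemma measurePreserving_reflectCoord (i : ι) (c : ℝ) : MeasurePreserving (reflectCoord i c) :=
  volume_preserving_pi (f := fun j t => if j = i then c - t else t) fun j => by
    by_cases hj : j = i
    · simpa [hj] using Measure.measurePreserving_sub_left volume c
    · simp only [hj, if_false]
      exact MeasurePreserving.id _

noncomputable def reflectCoordEquiv (i : ι) (c : ℝ) : (ι → ℝ) ≃ᵐ (ι → ℝ) :=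
  MeasurableEquiv.ofInvolutive _ (reflectCoord_involutive i c)
    (measurePreserving_reflectCoord i c).measurable

end Reflection

section SymmDecreasing

variable {ι : Type*}

/-- Applied in both directions, the condition also makes `f` even in `x i`. The hyperplane
`x i = 0` is exempt because of junk values such as `‖0‖ ^ (-k) = 0`. -/
def IsSymmDecreasingInCoord (i : ι) (f : (ι → ℝ) → ℝ) : Prop :=
  ∀ ⦃u v : ι → ℝ⦄, (∀ j ≠ i, u j = v j) → |u i| ≤ |v i| → u i ≠ 0 → f v ≤ f u

lemma IsSymmDecreasingInCoord.apply_eq {i : ι} {f : (ι → ℝ) → ℝ}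
    (hf : IsSymmDecreasingInCoord i f) {u v : ι → ℝ} (hoff : ∀ j ≠ i, u j = v j)
    (habs : |u i| = |v i|) : f u = f v := by
  by_cases hu : u i = 0
  · have huv : u = v := funext fun j => by
      by_cases hj : j = i
      · subst hj; rw [hu, eq_comm, ← abs_eq_zero, ← habs, hu, abs_zero]
      · exact hoff j hj
    rw [huv]
  · have hv : v i ≠ 0 := by rwa [← abs_ne_zero, ← habs, abs_ne_zero]
    exact le_antisymm (hf (fun j hj => (hoff j hj).symm) habs.ge hv) (hf hoff habs.le hu)

variable [DecidableEq ι] {i : ι} {f : (ι → ℝ) → ℝ} {lam : ℝ} {δ δ' x : ι → ℝ}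

lemma IsSymmDecreasingInCoord.min_add_min_reflectCoord_le (hf : IsSymmDecreasingInCoord i f)
    (hlam : 0 ≤ lam) (hoff : ∀ j ≠ i, δ j = δ' j) (h0 : 0 ≤ δ i) (hle : δ i ≤ δ' i)
    (hx : x i ≠ 0) (hxc : x i ≠ δ i + δ' i) (hxδ : x i ≠ δ i) (hxδ' : x i ≠ δ' i) :
    let y := reflectCoord i (δ i + δ' i) x
    min (lam * f x) (f (x - δ')) + min (lam * f y) (f (y - δ')) ≤
      min (lam * f x) (f (x - δ)) + min (lam * f y) (f (y - δ)) := by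
  intro y
  have hyx : ∀ j ≠ i, y j = x j := fun j hj => reflectCoord_of_ne _ x hj
  have hshift : ∀ j ≠ i, (x - δ) j = (x - δ') j := fun j hj => by simp [hoff j hj]
  have hyδ' : f (y - δ') = f (x - δ) := hf.apply_eq (fun j hj => by simp [hyx j hj, hoff j hj])
    (by rw [← abs_neg]; congr 1; simp only [Pi.sub_apply, y, reflectCoord_self]; ring)
  have hyδ : f (y - δ) = f (x - δ') := hf.apply_eq (fun j hj => by simp [hyx j hj, hoff j hj])
    (by rw [← abs_neg]; congr 1; simp only [Pi.sub_apply, y, reflectCoord_self]; ring)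
  rw [hyδ', hyδ]
  rcases le_total (2 * x i) (δ i + δ' i) with hc | hc
  · have hfy : lam * f y ≤ lam * f x := by
      refine mul_le_mul_of_nonneg_left (hf (fun j hj => (hyx j hj).symm) ?_ hx) hlam
      simpa [y, abs_sub_comm] using
        abs_sub_le_abs_sub_of_two_mul_le (t := x i) (by linarith : 0 ≤ δ i + δ' i) (by simpa)
    have hfδ' : f (x - δ') ≤ f (x - δ) :=
      hf hshift (by simpa using abs_sub_le_abs_sub_of_two_mul_le hle hc) (by simpa [sub_eq_zero])
    exact min_add_min_le_min_add_min hfy hfδ'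
  · have hfx : lam * f x ≤ lam * f y := by
      refine mul_le_mul_of_nonneg_left (hf hyx ?_ (by simpa [y, sub_eq_zero] using hxc.symm)) hlam
      simpa [y, abs_sub_comm] using
        abs_sub_le_abs_sub_of_le_two_mul (t := x i) (by linarith : 0 ≤ δ i + δ' i) (by simpa)
    have hfδ : f (x - δ) ≤ f (x - δ') :=
      hf (fun j hj => (hshift j hj).symm)
        (by simpa using abs_sub_le_abs_sub_of_le_two_mul hle hc) (by simpa [sub_eq_zero])
    linarith [min_add_min_le_min_add_min hfx hfδ]

variable [Fintype ι]

lemma IsSymmDecreasingInCoord.integral_min_sub_le (hf : IsSymmDecreasingInCoord i f)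
    (hfi : Integrable f) (hlam : 0 ≤ lam) (hoff : ∀ j ≠ i, δ j = δ' j) (h0 : 0 ≤ δ i)
    (hle : δ i ≤ δ' i) :
    ∫ z, min (lam * f z) (f (z - δ')) ≤ ∫ z, min (lam * f z) (f (z - δ)) := by
  have hmin : ∀ a, Integrable fun z => min (lam * f z) (f (z - a)) := fun a =>
    (hfi.const_mul lam).inf (hfi.comp_sub_right a)
  refine integral_le_integral_of_add_comp_le (e := reflectCoordEquiv i (δ i + δ' i))
    (measurePreserving_reflectCoord i (δ i + δ' i)) (hmin δ') (hmin δ) ?_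
  filter_upwards [Measure.ae_eval_ne _ i 0, Measure.ae_eval_ne _ i (δ i + δ' i),
    Measure.ae_eval_ne _ i (δ i), Measure.ae_eval_ne _ i (δ' i)] with x hx hxc hxδ hxδ'
  exact hf.min_add_min_reflectCoord_le hlam hoff h0 hle hx hxc hxδ hxδ'

end SymmDecreasing

lemma isSymmDecreasingInCoord_mixedNorm {ι : Type*} [Fintype ι] (i : ι) {k₁ k₂ σ C : ℝ}
    (hk₁ : 0 ≤ k₁) (hk₂ : 0 ≤ k₂) (hC : 0 ≤ C) :
    IsSymmDecreasingInCoord i fun z : ι → ℝ =>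
      C * ‖z‖ ^ (-k₁) * Real.sqrt (∑ j, z j ^ 2) ^ (-k₂) *
        Real.exp (-(∑ j, z j ^ 2) / (2 * σ ^ 2)) := by
  intro u v hoff habs hu
  have hcoord : ∀ j, |u j| ≤ |v j| := fun j => by
    by_cases hj : j = i
    · subst hj; exact habs
    · rw [hoff j hj]
  have hnorm : ‖u‖ ≤ ‖v‖ :=
    (pi_norm_le_iff_of_nonneg (norm_nonneg v)).mpr fun j =>
      (hcoord j).trans (norm_le_pi_norm v j)
  have hsq : ∑ j, u j ^ 2 ≤ ∑ j, v j ^ 2 :=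
    Finset.sum_le_sum fun j _ => sq_le_sq.mpr (hcoord j)
  have hnorm_pos : 0 < ‖u‖ := norm_pos_iff.mpr fun h => hu (by simp [h])
  have hsq_pos : 0 < ∑ j, u j ^ 2 :=
    Finset.sum_pos' (fun j _ => sq_nonneg _) ⟨i, Finset.mem_univ i, by positivity⟩
  dsimp only
  gcongr C * ?_ * ?_ * ?_
  · exact Real.rpow_le_rpow_of_nonpos hnorm_pos hnorm (neg_nonpos.mpr hk₁)
  · exact Real.rpow_le_rpow_of_nonpos (Real.sqrt_pos.mpr hsq_pos) (Real.sqrt_le_sqrt hsq)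
      (neg_nonpos.mpr hk₂)
  · exact Real.exp_le_exp.mpr (div_le_div_of_nonneg_right (neg_le_neg hsq) (by positivity))

theorem stmt_14_general {d : ℕ} (k₁ k₂ σ : ℝ) (hk₁ : 0 ≤ k₁) (hk₂ : 0 ≤ k₂)
    (C : ℝ) (hC : 0 < C)
    (π₀ : (Fin d → ℝ) → ℝ)
    (hπ₀ : π₀ = fun z =>
      C * ‖z‖ ^ (-k₁) * Real.sqrt (∑ i, z i ^ 2) ^ (-k₂) *
        Real.exp (-(∑ i, z i ^ 2) / (2 * σ ^ 2)))
    (hint : Integrable π₀)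
    (lam : ℝ) (hlam : 0 ≤ lam)
    (D : (Fin d → ℝ) → ℝ)
    (hD : D = fun δ => ∫ z, max (lam * π₀ z - π₀ (z - δ)) 0) :
    ∀ (i : Fin d) (δ δ' : Fin d → ℝ), (∀ j, j ≠ i → δ j = δ' j) →
      0 ≤ δ i → δ i ≤ δ' i → D δ ≤ D δ' := by
  intro i δ δ' hoff h0 hle
  have hsd : IsSymmDecreasingInCoord i π₀ :=
    hπ₀ ▸ isSymmDecreasingInCoord_mixedNorm i hk₁ hk₂ hC.le
  simp only [hD]
  rw [integral_max_sub_zero_eq (hint.const_mul lam) (hint.comp_sub_right δ),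
    integral_max_sub_zero_eq (hint.const_mul lam) (hint.comp_sub_right δ')]
  exact sub_le_sub_left (hsd.integral_min_sub_le hint hlam hoff h0 hle) _

/-- For the mixed-norm smoothing density
`π₀(z) ∝ ‖z‖_∞^{-k₁} ‖z‖₂^{-k₂} exp(-‖z‖₂²/(2σ²))`, the discrepancy
`D(δ) = ∫ (λπ₀(z) - π₀(z-δ))₊ dz` is nondecreasing in `|δᵢ|` in each coordinate. -/
theorem stmt_14 {d : ℕ} (k₁ k₂ σ : ℝ) (hk₁ : 0 ≤ k₁) (hk₂ : 0 ≤ k₂) (hσ : 0 < σ)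
    (C : ℝ) (hC : 0 < C)
    (π₀ : (Fin d → ℝ) → ℝ)
    (hπ₀ : π₀ = fun z =>
      C * ‖z‖ ^ (-k₁) * Real.sqrt (∑ i, z i ^ 2) ^ (-k₂) *
        Real.exp (-(∑ i, z i ^ 2) / (2 * σ ^ 2)))
    (hint : Integrable π₀) (hprob : ∫ z, π₀ z = 1)
    (lam : ℝ) (hlam : 0 ≤ lam)
    (D : (Fin d → ℝ) → ℝ)
    (hD : D = fun δ => ∫ z, max (lam * π₀ z - π₀ (z - δ)) 0) :
    ∀ (i : Fin d) (δ δ' : Fin d → ℝ), (∀ j, j ≠ i → δ j = δ' j) →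
      0 ≤ δ i → δ i ≤ δ' i → D δ ≤ D δ' :=
  stmt_14_general k₁ k₂ σ hk₁ hk₂ C hC π₀ hπ₀ hint lam hlam D hD
end

section
/- With the mixed-norm smoothing density π₀(z) ∝ ‖z‖_∞^{−k} exp(−‖z‖₂²/(2σ²)) (k ≥ 0, σ > 0) and the ℓ_∞ ball B = {δ : ‖δ‖_∞ ≤ r}, the maximum of D(δ) = ∫ (λπ₀(z) − π₀(z−δ))₊ dz over δ ∈ B is attained at the vertex δ* = (r, r, …, r), for every λ > 0. -/
open MeasureTheory Set Pointwise

/- 1-D balancedness (away from 0): symmetric order-ideal condition -/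
private def Bal1 (S : Set ℝ) : Prop := ∀ x ∈ S, ∀ y : ℝ, y ≠ 0 → |y| ≤ |x| → y ∈ S

private lemma vol_preimage_sub (c : ℝ) (T : Set ℝ) :
    volume ((· - c) ⁻¹' T) = volume T := by
  have h : (· - c) ⁻¹' T = c +ᵥ T := by
    ext x
    simp [Set.mem_vadd_set_iff_neg_vadd_mem, sub_eq_neg_add]
  rw [h, measure_vadd]

private lemma dim1 {S T : Set ℝ} (hS : Bal1 S) (hT : Bal1 T) {c₀ c : ℝ}
    (h : |c₀| ≤ c) :
    volume (S ∩ (· - c) ⁻¹' T) ≤ volume (S ∩ (· - c₀) ⁻¹' T) := by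
  rcases eq_empty_or_nonempty S with rfl | hSne
  · simp
  rcases eq_empty_or_nonempty T with rfl | hTne
  · simp
  by_cases hbS : BddAbove (abs '' S)
  · by_cases hbT : BddAbove (abs '' T)
    · -- main case
      set a := sSup (abs '' S) with ha
      set b := sSup (abs '' T) with hb
      have hSsub : S ⊆ Icc (-a) a := by
        intro x hx
        exact abs_le.mp (le_csSup hbS ⟨x, hx, rfl⟩)
      have hTsub : T ⊆ Icc (-b) b := by
        intro x hx
        exact abs_le.mp (le_csSup hbT ⟨x, hx, rfl⟩)
      have hSsup : ∀ x : ℝ, x ∈ Ioo (-a) a → x ≠ 0 → x ∈ S := by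
        intro x hx hx0
        have : |x| < a := abs_lt.mpr ⟨hx.1, hx.2⟩
        obtain ⟨y, ⟨z, hz, rfl⟩, hlt⟩ := exists_lt_of_lt_csSup (hSne.image _) this
        exact hS z hz x hx0 hlt.le
      have hTsup : ∀ x : ℝ, x ∈ Ioo (-b) b → x ≠ 0 → x ∈ T := by
        intro x hx hx0
        have : |x| < b := abs_lt.mpr ⟨hx.1, hx.2⟩
        obtain ⟨y, ⟨z, hz, rfl⟩, hlt⟩ := exists_lt_of_lt_csSup (hTne.image _) this
        exact hT z hz x hx0 hlt.le
      have ha0 : 0 ≤ a := by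
        obtain ⟨x, hx⟩ := hSne
        exact (abs_nonneg x).trans (le_csSup hbS ⟨x, hx, rfl⟩)
      have hb0 : 0 ≤ b := by
        obtain ⟨x, hx⟩ := hTne
        exact (abs_nonneg x).trans (le_csSup hbT ⟨x, hx, rfl⟩)
      have hub : volume (S ∩ (· - c) ⁻¹' T) ≤
          ENNReal.ofReal (min a (b + c) - max (-a) (-b + c)) := by
        have hsub : S ∩ (· - c) ⁻¹' T ⊆ Icc (max (-a) (-b + c)) (min a (b + c)) := by
          rintro x ⟨hx1, hx2⟩
          have h1 := hSsub hx1
          have h2 := hTsub hx2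
          simp only [mem_Icc] at h1 h2 ⊢
          exact ⟨max_le h1.1 (by linarith), le_min h1.2 (by linarith)⟩
        calc volume (S ∩ (· - c) ⁻¹' T) ≤ volume (Icc (max (-a) (-b + c)) (min a (b + c))) :=
              measure_mono hsub
          _ = ENNReal.ofReal (min a (b + c) - max (-a) (-b + c)) := Real.volume_Icc
      have hlb : ENNReal.ofReal (min a (b + c₀) - max (-a) (-b + c₀)) ≤
          volume (S ∩ (· - c₀) ⁻¹' T) := by
        have hsub : Ioo (max (-a) (-b + c₀)) (min a (b + c₀)) \ ({0} ∪ {c₀}) ⊆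
            S ∩ (· - c₀) ⁻¹' T := by
          rintro x ⟨hx, hx2⟩
          simp only [Set.mem_union, Set.mem_singleton_iff, not_or] at hx2
          simp only [mem_Ioo, max_lt_iff, lt_min_iff] at hx
          refine ⟨hSsup x (mem_Ioo.mpr ⟨hx.1.1, hx.2.1⟩) hx2.1, ?_⟩
          exact hTsup (x - c₀) (mem_Ioo.mpr ⟨by linarith [hx.1.2], by linarith [hx.2.2]⟩)
            (sub_ne_zero.mpr hx2.2)
        calc ENNReal.ofReal (min a (b + c₀) - max (-a) (-b + c₀))
            = volume (Ioo (max (-a) (-b + c₀)) (min a (b + c₀)) \ ({0} ∪ {c₀})) := by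
              rw [measure_diff_null, Real.volume_Ioo]
              exact measure_union_null (measure_singleton 0) (measure_singleton c₀)
          _ ≤ volume (S ∩ (· - c₀) ⁻¹' T) := measure_mono hsub
      refine hub.trans (le_trans (ENNReal.ofReal_le_ofReal ?_) hlb)
      rcases abs_le.mp h with ⟨h1, h2⟩
      simp only [min_def, max_def]
      split_ifs <;> linarith
    · -- T unbounded: T ⊇ {0}ᶜ
      have hTuniv : ∀ x : ℝ, x ≠ 0 → x ∈ T := by
        intro x hx0
        rcases not_bddAbove_iff.mp hbT (|x|) with ⟨y, ⟨z, hz, rfl⟩, hlt⟩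
        exact hT z hz x hx0 hlt.le
      calc volume (S ∩ (· - c) ⁻¹' T) ≤ volume S := measure_mono inter_subset_left
        _ = volume (S \ {c₀}) := (measure_diff_null (measure_singleton c₀)).symm
        _ ≤ volume (S ∩ (· - c₀) ⁻¹' T) := by
            refine measure_mono fun x hx => ⟨hx.1, ?_⟩
            exact hTuniv _ (sub_ne_zero.mpr hx.2)
  · -- S unbounded : S ⊇ {0}ᶜ
    have hSuniv : ∀ x : ℝ, x ≠ 0 → x ∈ S := by
      intro x hx0
      rcases not_bddAbove_iff.mp hbS (|x|) with ⟨y, ⟨z, hz, rfl⟩, hlt⟩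
      exact hS z hz x hx0 hlt.le
    calc volume (S ∩ (· - c) ⁻¹' T) ≤ volume ((· - c) ⁻¹' T) := measure_mono inter_subset_right
      _ = volume T := vol_preimage_sub c T
      _ = volume ((· - c₀) ⁻¹' T) := (vol_preimage_sub c₀ T).symm
      _ = volume ((· - c₀) ⁻¹' T \ {0}) := (measure_diff_null (measure_singleton 0)).symm
      _ ≤ volume (S ∩ (· - c₀) ⁻¹' T) := by
          refine measure_mono fun x hx => ⟨hSuniv x hx.2, hx.1⟩



/- multidimensional balancedness away from zero -/
private def BalC {d : ℕ} (A : Set (Fin d → ℝ)) : Prop :=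
  ∀ z ∈ A, ∀ (i : Fin d) (x : ℝ), x ≠ 0 → |x| ≤ |z i| → Function.update z i x ∈ A

private lemma insertNth_sub_fun {n : ℕ} (i : Fin (n + 1)) (x : ℝ) (w : Fin n → ℝ)
    (v : Fin (n + 1) → ℝ) :
    i.insertNth x w - v = i.insertNth (x - v i) (fun j => w j - v (i.succAbove j)) := by
  funext j
  cases j using i.succAboveCases <;> simp [Pi.sub_apply]

private lemma slice_vol {n : ℕ} {A B : Set (Fin (n + 1) → ℝ)} (hA : MeasurableSet A)
    (hB : MeasurableSet B) (i : Fin (n + 1)) (v : Fin (n + 1) → ℝ) :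
    volume (A ∩ (· - v) ⁻¹' B) =
      ∫⁻ w : Fin n → ℝ, volume ({x : ℝ | i.insertNth x w ∈ A} ∩
        (· - v i) ⁻¹' {y : ℝ | i.insertNth y (fun j => w j - v (i.succAbove j)) ∈ B}) := by
  have hmeas : MeasurableSet (A ∩ (· - v) ⁻¹' B) :=
    hA.inter ((measurable_id.sub measurable_const) hB)
  set e : (Fin (n + 1) → ℝ) ≃ᵐ ℝ × (Fin n → ℝ) :=
    MeasurableEquiv.piFinSuccAbove (fun _ => ℝ) i with he
  have hpres : MeasurePreserving e.symm volume volume :=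
    (volume_preserving_piFinSuccAbove (fun _ => ℝ) i).symm e
  rw [← hpres.measure_preimage hmeas.nullMeasurableSet]
  rw [Measure.volume_eq_prod, Measure.prod_apply_symm (e.symm.measurable hmeas)]
  refine lintegral_congr fun w => ?_
  congr 1
  ext x
  have hesymm : e.symm (x, w) = i.insertNth x w := by
    simp [he, MeasurableEquiv.piFinSuccAbove, Fin.insertNthEquiv]
  simp only [Set.mem_preimage, Set.mem_inter_iff, hesymm, Set.mem_setOf_eq,
    insertNth_sub_fun]

private lemma step {d : ℕ} {A B : Set (Fin d → ℝ)} (hA : MeasurableSet A)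
    (hB : MeasurableSet B) (hbA : BalC A) (hbB : BalC B) (i : Fin d)
    (δ : Fin d → ℝ) {c : ℝ} (hc : |δ i| ≤ c) :
    volume (A ∩ (· - Function.update δ i c) ⁻¹' B) ≤ volume (A ∩ (· - δ) ⁻¹' B) := by
  cases d with
  | zero => exact i.elim0
  | succ n =>
    rw [slice_vol hA hB i, slice_vol hA hB i]
    refine lintegral_mono fun w => ?_
    have h1 : Function.update δ i c i = c := Function.update_self i c δ
    have h2 : (fun j => w j - Function.update δ i c (i.succAbove j)) =
        (fun j => w j - δ (i.succAbove j)) := by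
      funext j
      rw [Function.update_of_ne (Fin.succAbove_ne i j)]
    rw [h1, h2]
    have hSbal : Bal1 {x : ℝ | i.insertNth x w ∈ A} := by
      intro x hx y hy0 hle
      have := hbA _ hx i y hy0 (by rwa [Fin.insertNth_apply_same])
      rwa [Fin.update_insertNth] at this
    have hTbal : Bal1 {y : ℝ | i.insertNth y (fun j => w j - δ (i.succAbove j)) ∈ B} := by
      intro x hx y hy0 hle
      have := hbB _ hx i y hy0 (by rwa [Fin.insertNth_apply_same])
      rwa [Fin.update_insertNth] at this
    exact dim1 hSbal hTbal hc

private lemma multi {d : ℕ} {A B : Set (Fin d → ℝ)} (hA : MeasurableSet A)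
    (hB : MeasurableSet B) (hbA : BalC A) (hbB : BalC B) {r : ℝ}
    (δ : Fin d → ℝ) (hδ : ∀ i, |δ i| ≤ r) :
    volume (A ∩ (· - fun _ => r) ⁻¹' B) ≤ volume (A ∩ (· - δ) ⁻¹' B) := by
  classical
  have key : ∀ s : Finset (Fin d),
      volume (A ∩ (· - fun _ => r) ⁻¹' B) ≤
        volume (A ∩ (· - fun i => if i ∈ s then δ i else r) ⁻¹' B) := by
    intro s
    induction s using Finset.induction_on with
    | empty => simp
    | @insert i s his ih =>
      refine ih.trans ?_
      have hv : (fun j => if j ∈ s then δ j else r) =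
          Function.update (fun j => if j ∈ insert i s then δ j else r) i r := by
        funext j
        by_cases hj : j = i
        · subst hj; simp [his]
        · simp [Function.update_of_ne hj, Finset.mem_insert, hj]
      rw [hv]
      have hci : |(fun j => if j ∈ insert i s then δ j else r) i| ≤ r := by
        simp [hδ i]
      exact step hA hB hbA hbB i _ hci
  have := key Finset.univ
  simpa using this



/-- With the mixed-norm smoothing density `π₀(z) ∝ ‖z‖_∞^{-k} exp(-‖z‖₂²/(2σ²))`
and the `ℓ∞` ball of radius `r`, the discrepancy `D(δ) = ∫ (λπ₀(z) - π₀(z-δ))₊ dz`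
is maximized over the ball at the vertex `δ* = (r, …, r)`. -/
theorem stmt_15 {d : ℕ} (k σ r : ℝ) (hk : 0 ≤ k) (hσ : 0 < σ) (hr : 0 < r)
    (C : ℝ) (hC : 0 < C)
    (π₀ : (Fin d → ℝ) → ℝ)
    (hπ₀ : π₀ = fun z =>
      C * ‖z‖ ^ (-k) * Real.exp (-(∑ i, z i ^ 2) / (2 * σ ^ 2)))
    (hint : Integrable π₀) (hprob : ∫ z, π₀ z = 1)
    (lam : ℝ) (hlam : 0 < lam)
    (D : (Fin d → ℝ) → ℝ)
    (hD : D = fun δ => ∫ z, max (lam * π₀ z - π₀ (z - δ)) 0) :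
    IsGreatest (D '' {δ | ‖δ‖ ≤ r}) (D fun _ => r) := by
  -- basic facts about π₀
  have hP0 : ∀ z, 0 ≤ π₀ z := by
    intro z; rw [hπ₀]
    have := Real.rpow_nonneg (norm_nonneg z) (-k)
    positivity
  have hPmeas : Measurable π₀ := by
    rw [hπ₀]
    have h1 : Measurable fun x : ℝ => x ^ (-k) :=
      measurable_of_continuousOn_compl_singleton 0 fun x hx =>
        (Real.continuousAt_rpow_const x (-k) (Or.inl hx)).continuousWithinAt
    have h2 : Measurable fun z : Fin d → ℝ => ‖z‖ ^ (-k) := h1.comp measurable_norm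
    have h3 : Measurable fun z : Fin d → ℝ =>
        Real.exp (-(∑ i, z i ^ 2) / (2 * σ ^ 2)) := by
      apply Real.measurable_exp.comp
      apply Measurable.div _ measurable_const
      apply Measurable.neg
      exact Finset.measurable_sum _ fun i _ => (measurable_pi_apply i).pow measurable_const
    exact ((measurable_const.mul h2).mul h3)
  have hmono : ∀ (z : Fin d → ℝ) (i : Fin d) (x : ℝ), x ≠ 0 → |x| ≤ |z i| →
      π₀ z ≤ π₀ (Function.update z i x) := by
    intro z i x hx0 hle
    set u := Function.update z i x with hu
    have hui : u i = x := Function.update_self i x z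
    have hnle : ‖u‖ ≤ ‖z‖ := by
      rw [pi_norm_le_iff_of_nonneg (norm_nonneg z)]
      intro j
      by_cases hj : j = i
      · subst hj
        rw [hui, Real.norm_eq_abs]
        exact hle.trans ((Real.norm_eq_abs (z j)).symm ▸ norm_le_pi_norm z j)
      · rw [hu, Function.update_of_ne hj]
        exact norm_le_pi_norm z j
    have hnpos : 0 < ‖u‖ := by
      have : 0 < |x| := abs_pos.mpr hx0
      calc (0:ℝ) < |x| := this
        _ = ‖u i‖ := by rw [hui, Real.norm_eq_abs]
        _ ≤ ‖u‖ := norm_le_pi_norm u i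
    have hrpow : ‖z‖ ^ (-k) ≤ ‖u‖ ^ (-k) :=
      Real.rpow_le_rpow_of_nonpos hnpos hnle (neg_nonpos.mpr hk)
    have hsum : ∑ j, u j ^ 2 ≤ ∑ j, z j ^ 2 := by
      apply Finset.sum_le_sum
      intro j _
      by_cases hj : j = i
      · subst hj
        rw [hui]
        calc x ^ 2 = |x| ^ 2 := (sq_abs x).symm
          _ ≤ |z j| ^ 2 := by gcongr
          _ = z j ^ 2 := sq_abs (z j)
      · rw [hu, Function.update_of_ne hj]
    have hexp : Real.exp (-(∑ j, z j ^ 2) / (2 * σ ^ 2)) ≤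
        Real.exp (-(∑ j, u j ^ 2) / (2 * σ ^ 2)) := by
      apply Real.exp_le_exp.mpr
      have h2σ : (0:ℝ) < 2 * σ ^ 2 := by positivity
      exact div_le_div_of_nonneg_right (neg_le_neg hsum) h2σ.le
    rw [hπ₀]
    simp only
    apply mul_le_mul (mul_le_mul_of_nonneg_left hrpow hC.le) hexp (Real.exp_nonneg _)
    have := Real.rpow_nonneg (norm_nonneg u) (-k)
    positivity
  -- measurable shifted densities and min-overlap function
  have hshift : ∀ v : Fin d → ℝ, Measurable fun z : Fin d → ℝ => π₀ (z - v) :=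
    fun v => hPmeas.comp (measurable_id.sub measurable_const)
  have hgmeas : ∀ v : Fin d → ℝ,
      Measurable fun z => min (lam * π₀ z) (π₀ (z - v)) :=
    fun v => (hPmeas.const_mul lam).min (hshift v)
  have hg0 : ∀ (v : Fin d → ℝ) z, 0 ≤ min (lam * π₀ z) (π₀ (z - v)) :=
    fun v z => le_min (mul_nonneg hlam.le (hP0 z)) (hP0 _)
  -- the integral of lam * π₀
  have hlin : ∫⁻ z, ENNReal.ofReal (lam * π₀ z) = ENNReal.ofReal lam := by
    have h1 : (fun z : Fin d → ℝ => ENNReal.ofReal (lam * π₀ z)) =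
        fun z => ENNReal.ofReal lam * ENNReal.ofReal (π₀ z) :=
      funext fun z => ENNReal.ofReal_mul hlam.le
    rw [h1, lintegral_const_mul (f := fun z => ENNReal.ofReal (π₀ z)) _ hPmeas.ennreal_ofReal,
      ← ofReal_integral_eq_lintegral_ofReal hint (ae_of_all _ hP0), hprob]
    simp
  have hIfin : ∀ v : Fin d → ℝ,
      ∫⁻ z, ENNReal.ofReal (min (lam * π₀ z) (π₀ (z - v))) ≤ ENNReal.ofReal lam := by
    intro v
    rw [← hlin]
    exact lintegral_mono fun z => ENNReal.ofReal_le_ofReal (min_le_left _ _)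
  -- rewrite D via truncated subtraction of lintegrals
  have hD2 : ∀ v : Fin d → ℝ, D v =
      (ENNReal.ofReal lam - ∫⁻ z, ENNReal.ofReal (min (lam * π₀ z) (π₀ (z - v)))).toReal := by
    intro v
    rw [hD]
    simp only
    have heq := integral_eq_lintegral_of_nonneg_ae (μ := volume)
      (f := fun z : Fin d → ℝ => max (lam * π₀ z - π₀ (z - v)) 0)
      (ae_of_all _ fun z => le_max_right _ _)
      (((hPmeas.const_mul lam).sub (hshift v)).max measurable_const).aestronglyMeasurable
    rw [heq]
    congr 1
    rw [← hlin, ← lintegral_sub ((hgmeas v).ennreal_ofReal)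
      (lt_of_le_of_lt (hIfin v) ENNReal.ofReal_lt_top).ne
      (ae_of_all _ fun z => ENNReal.ofReal_le_ofReal (min_le_left _ _))]
    refine lintegral_congr fun z => ?_
    beta_reduce
    rcases le_total (lam * π₀ z) (π₀ (z - v)) with h | h
    · rw [max_eq_right (by linarith), min_eq_left h]
      simp
    · rw [max_eq_left (by linarith), min_eq_right h,
        ENNReal.ofReal_sub _ (hP0 _)]
  -- superlevel sets
  have hA : ∀ t : ℝ, MeasurableSet {z : Fin d → ℝ | t < lam * π₀ z} :=
    fun t => measurableSet_lt measurable_const (hPmeas.const_mul lam)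
  have hB : ∀ t : ℝ, MeasurableSet {z : Fin d → ℝ | t < π₀ z} :=
    fun t => measurableSet_lt measurable_const hPmeas
  have hbA : ∀ t : ℝ, BalC {z : Fin d → ℝ | t < lam * π₀ z} := by
    intro t z hz i x hx0 hle
    exact lt_of_lt_of_le hz (mul_le_mul_of_nonneg_left (hmono z i x hx0 hle) hlam.le)
  have hbB : ∀ t : ℝ, BalC {z : Fin d → ℝ | t < π₀ z} := by
    intro t z hz i x hx0 hle
    exact lt_of_lt_of_le hz (hmono z i x hx0 hle)
  -- layer cake
  have hlayer : ∀ v : Fin d → ℝ,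
      ∫⁻ z, ENNReal.ofReal (min (lam * π₀ z) (π₀ (z - v))) =
        ∫⁻ t in Ioi (0:ℝ), volume ({z : Fin d → ℝ | t < lam * π₀ z} ∩
          (· - v) ⁻¹' {z : Fin d → ℝ | t < π₀ z}) := by
    intro v
    rw [lintegral_eq_lintegral_meas_lt volume (ae_of_all _ (hg0 v)) (hgmeas v).aemeasurable]
    refine lintegral_congr fun t => ?_
    congr 1
    ext z
    simp [lt_min_iff]
  -- membership and upper bound
  have hnormconst : ‖(fun _ => r : Fin d → ℝ)‖ ≤ r := by
    rw [pi_norm_le_iff_of_nonneg hr.le]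
    intro i
    rw [Real.norm_eq_abs, abs_of_pos hr]
  constructor
  · exact ⟨_, hnormconst, rfl⟩
  · rintro y ⟨δ, hδ, rfl⟩
    have hδi : ∀ i, |δ i| ≤ r := by
      intro i
      have h1 := norm_le_pi_norm δ i
      rw [Real.norm_eq_abs] at h1
      exact h1.trans hδ
    have hkey : ∫⁻ z, ENNReal.ofReal (min (lam * π₀ z) (π₀ (z - fun _ => r))) ≤
        ∫⁻ z, ENNReal.ofReal (min (lam * π₀ z) (π₀ (z - δ))) := by
      rw [hlayer, hlayer]
      exact lintegral_mono fun t => multi (hA t) (hB t) (hbA t) (hbB t) δ hδi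
    rw [hD2 δ, hD2 (fun _ => r)]
    apply ENNReal.toReal_mono
    · exact ne_top_of_le_ne_top ENNReal.ofReal_ne_top tsub_le_self
    · exact tsub_le_tsub_left hkey _
end

section
/- Let π₀ be a spherically symmetric probability density on ℝ^d (π₀(z) depends only on ‖z‖₂), x₀ ∈ ℝ^d, and define L(B) = min over measurable f:ℝ^d→[0,1] with E_{π₀}[f(x₀+·)] = p₀, and over δ ∈ B, of E_{z∼π₀}[f(x₀+δ+z)]. Then L({δ : ‖δ‖_∞ ≤ r}) = L({δ : ‖δ‖₂ ≤ √d·r}). -/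
/-!
The certified bound depends on a perturbation set only through the Euclidean norms of its
elements: if `‖δ'‖₂ = ‖δ‖₂`, a rotation `T` with `T δ' = δ` preserves Lebesgue measure and the
radial density, so replacing `f` by `x ↦ f (x₀ + T (x - x₀))` keeps the constraint value `p₀`
and moves the value at `x₀ + δ` to `x₀ + δ'`. The `ℓ∞` ball of radius `r` and the `ℓ₂` ball of
radius `√d · r` realise the same Euclidean norms: the former lies in the latter, and a point of
the latter of norm `ρ` has the norm of the diagonal vector with entries `ρ / √d`.
-/

open MeasureTheory Set

section

variable {ι : Type*} [Fintype ι]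

theorem exists_measurePreserving_continuousLinearEquiv_apply_eq {a b : ι → ℝ}
    (h : ∑ i, a i ^ 2 = ∑ i, b i ^ 2) :
    ∃ T : (ι → ℝ) ≃L[ℝ] (ι → ℝ), MeasurePreserving T ∧
      (∀ z, ∑ i, T z i ^ 2 = ∑ i, z i ^ 2) ∧ T a = b := by
  have norm_eq_iff (x y : ι → ℝ) :
      ‖WithLp.toLp 2 x‖ = ‖WithLp.toLp 2 y‖ ↔ ∑ i, x i ^ 2 = ∑ i, y i ^ 2 := by
    rw [← sq_eq_sq₀ (norm_nonneg _) (norm_nonneg _), EuclideanSpace.real_norm_sq_eq,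
      EuclideanSpace.real_norm_sq_eq]
  let e := Submodule.reflection (ℝ ∙ (WithLp.toLp 2 a - WithLp.toLp 2 b))ᗮ
  refine ⟨(EuclideanSpace.equiv ι ℝ).symm.trans
    (e.toContinuousLinearEquiv.trans (EuclideanSpace.equiv ι ℝ)), ?_, fun z => ?_, ?_⟩
  · exact (PiLp.volume_preserving_ofLp ι).comp
      (e.measurePreserving.comp (PiLp.volume_preserving_toLp ι))
  · exact (norm_eq_iff _ _).1 (e.norm_map _)
  · change WithLp.ofLp (e (WithLp.toLp 2 a)) = b
    rw [Submodule.reflection_sub ((norm_eq_iff a b).2 h)]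

theorem sqrt_sum_sq_le_sqrt_card_mul {δ : ι → ℝ} {r : ℝ} (h : ∀ i, |δ i| ≤ r) :
    √(∑ i, δ i ^ 2) ≤ √(Fintype.card ι) * r := by
  cases isEmpty_or_nonempty ι with
  | inl _ => simp
  | inr hne =>
    have hr : 0 ≤ r := (abs_nonneg _).trans (h hne.some)
    have hsum : ∑ i, δ i ^ 2 ≤ Fintype.card ι * r ^ 2 := by
      refine (Finset.sum_le_card_nsmul _ _ (r ^ 2) fun i _ => ?_).trans_eq (by simp)
      simpa only [sq_abs] using pow_le_pow_left₀ (abs_nonneg (δ i)) (h i) 2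
    calc √(∑ i, δ i ^ 2) ≤ √(Fintype.card ι * r ^ 2) := Real.sqrt_le_sqrt hsum
      _ = √(Fintype.card ι) * r := by rw [Real.sqrt_mul (Nat.cast_nonneg _), Real.sqrt_sq hr]

theorem exists_abs_le_and_sum_sq_eq {δ : ι → ℝ} {r : ℝ}
    (h : √(∑ i, δ i ^ 2) ≤ √(Fintype.card ι) * r) :
    ∃ δ' : ι → ℝ, (∀ i, |δ' i| ≤ r) ∧ ∑ i, δ' i ^ 2 = ∑ i, δ i ^ 2 := by
  cases isEmpty_or_nonempty ι with
  | inl _ => exact ⟨δ, isEmptyElim, rfl⟩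
  | inr hne =>
    have hcard : 0 < √(Fintype.card ι) := by simp [Fintype.card_pos]
    set c := √(∑ i, δ i ^ 2) / √(Fintype.card ι)
    refine ⟨fun _ => c, fun _ => ?_, ?_⟩
    · rw [abs_of_nonneg (by positivity), div_le_iff₀ hcard, mul_comm]
      exact h
    · rw [Finset.sum_const, Finset.card_univ, nsmul_eq_mul, div_pow,
        Real.sq_sqrt (Finset.sum_nonneg fun i _ => sq_nonneg _), Real.sq_sqrt (Nat.cast_nonneg _)]
      field_simp

def certifiedValues (π₀ : (ι → ℝ) → ℝ) (x₀ : ι → ℝ) (p₀ : ℝ) (B : Set (ι → ℝ)) : Set ℝ :=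
  {v : ℝ | ∃ (f : (ι → ℝ) → ℝ) (δ : ι → ℝ),
    Measurable f ∧ (∀ z, f z ∈ Icc (0:ℝ) 1) ∧
    (∫ z, f (x₀ + z) * π₀ z) = p₀ ∧ δ ∈ B ∧
    v = ∫ z, f (x₀ + δ + z) * π₀ z}

theorem certifiedValues_subset_of_radial {π₀ : (ι → ℝ) → ℝ} (g : ℝ → ℝ)
    (hsym : π₀ = fun z => g √(∑ i, z i ^ 2)) (x₀ : ι → ℝ) (p₀ : ℝ) {B B' : Set (ι → ℝ)}
    (hB : ∀ δ ∈ B, ∃ δ' ∈ B', ∑ i, δ' i ^ 2 = ∑ i, δ i ^ 2) :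
    certifiedValues π₀ x₀ p₀ B ⊆ certifiedValues π₀ x₀ p₀ B' := by
  rintro v ⟨f, δ, hf, hf01, hp₀, hδ, rfl⟩
  obtain ⟨δ', hδ', hnorm⟩ := hB δ hδ
  obtain ⟨T, hT, hTnorm, hTδ'⟩ := exists_measurePreserving_continuousLinearEquiv_apply_eq hnorm
  have hπ₀T : ∀ z, π₀ (T z) = π₀ z := fun z => by subst hsym; simp only [hTnorm]
  have hcomp : ∀ h : (ι → ℝ) → ℝ, ∫ z, h (T z) * π₀ z = ∫ z, h z * π₀ z := fun h => by
    simpa only [hπ₀T] using hT.integral_comp T.toHomeomorph.measurableEmbedding fun w => h w * π₀ w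
  refine ⟨fun x => f (x₀ + T (x - x₀)), δ', ?_, fun _ => hf01 _, ?_, hδ', ?_⟩
  · fun_prop
  · simpa [hp₀] using hcomp fun w => f (x₀ + w)
  · simpa [hTδ', add_assoc] using (hcomp fun w => f (x₀ + δ + w)).symm

end

theorem stmt_17_general {d : ℕ} (π₀ : (Fin d → ℝ) → ℝ)
    (g : ℝ → ℝ) (hsym : π₀ = fun z => g (Real.sqrt (∑ i, z i ^ 2)))
    (x₀ : Fin d → ℝ) (p₀ : ℝ)
    (L : Set (Fin d → ℝ) → ℝ)
    (hL : L = fun B => sInf {v : ℝ | ∃ (f : (Fin d → ℝ) → ℝ) (δ : Fin d → ℝ),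
      Measurable f ∧ (∀ z, f z ∈ Icc (0:ℝ) 1) ∧
      (∫ z, f (x₀ + z) * π₀ z) = p₀ ∧ δ ∈ B ∧
      v = ∫ z, f (x₀ + δ + z) * π₀ z}) (r : ℝ) :
    L {δ | ∀ i, |δ i| ≤ r} = L {δ | Real.sqrt (∑ i, δ i ^ 2) ≤ Real.sqrt d * r} := by
  change L = fun B => sInf (certifiedValues π₀ x₀ p₀ B) at hL
  subst hL
  refine congrArg sInf <|
    (certifiedValues_subset_of_radial g hsym x₀ p₀ fun δ hδ => ⟨δ, ?_, rfl⟩).antisymm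
      (certifiedValues_subset_of_radial g hsym x₀ p₀ fun δ hδ => ?_)
  · simpa using sqrt_sum_sq_le_sqrt_card_mul hδ
  · exact exists_abs_le_and_sum_sq_eq (by simpa using hδ)

/-- For a spherically symmetric smoothing density, the certified lower bound for the
`ℓ∞` ball of radius `r` coincides with that for the `ℓ₂` ball of radius `√d · r`. -/
theorem stmt_17 {d : ℕ} (π₀ : (Fin d → ℝ) → ℝ)
    (hmeas : Measurable π₀) (hpos : ∀ z, 0 ≤ π₀ z)
    (hint : Integrable π₀) (hprob : ∫ z, π₀ z = 1)
    (g : ℝ → ℝ) (hsym : π₀ = fun z => g (Real.sqrt (∑ i, z i ^ 2)))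
    (x₀ : Fin d → ℝ) (p₀ : ℝ) (hp₀ : p₀ ∈ Ioo (0:ℝ) 1)
    (L : Set (Fin d → ℝ) → ℝ)
    (hL : L = fun B => sInf {v : ℝ | ∃ (f : (Fin d → ℝ) → ℝ) (δ : Fin d → ℝ),
      Measurable f ∧ (∀ z, f z ∈ Icc (0:ℝ) 1) ∧
      (∫ z, f (x₀ + z) * π₀ z) = p₀ ∧ δ ∈ B ∧
      v = ∫ z, f (x₀ + δ + z) * π₀ z}) (r : ℝ) (hr : 0 < r) :
    L {δ | ∀ i, |δ i| ≤ r} = L {δ | Real.sqrt (∑ i, δ i ^ 2) ≤ Real.sqrt d * r} :=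
  stmt_17_general π₀ g hsym x₀ p₀ L hL r
end
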